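/- Let e be a real number with 0 ≤ e < 1, set η = √(1 − e²), let k be a natural number and ν a real number. Then (1/(2π)) · ∫₀^{2π} sin(k·f + ν) · η³/(1 + e·cos f)² df = (−e)^k · (1 + k·η)/(1 + η)^k · sin ν. In particular, for ν = 0 the average of sin(k·f) over the mean anomaly vanishes. -/

import Mathlib

/-!
On the unit circle `z = exp (θ * I)`, with `β = -e / (1 + η)` one has
`2 z (1 + e cos θ) = (1 + η) (1 - β z) (z - β)`, so `exp (k θ I) η³ / (1 + e cos θ)²` is a constant
multiple of `z ^ (k + 2) / ((1 - β z) (z - β))²`. As `|β| < 1`, the Cauchy integral formula for the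
derivative at the double pole `β` gives `∫₀^{2π} exp (k θ I) η³ / (1 + e cos θ)² dθ = 2π β^k (1 + k η)`,
and the sine integral is the imaginary part of this after multiplying by `exp (ν I)`.
-/

open Real intervalIntegral

section

open Complex Metric

theorem integral_exp_mul_div_sub_sq {U : Set ℂ} (hU : IsOpen U) (hU1 : closedBall (0 : ℂ) 1 ⊆ U)
    {f : ℂ → ℂ} (hf : DifferentiableOn ℂ f U) {w : ℂ} (hw : ‖w‖ < 1) :
    ∫ θ in (0 : ℝ)..2 * π, exp (θ * I) * f (exp (θ * I)) / (exp (θ * I) - w) ^ 2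
      = 2 * π * deriv f w := by
  have hcauchy := two_pi_I_inv_smul_circleIntegral_sub_sq_inv_smul_of_differentiable hU hU1 hf
    (mem_ball_zero_iff.2 hw)
  have hcircle : (∮ z in C(0, 1), ((z - w) ^ 2)⁻¹ • f z)
      = I * ∫ θ in (0 : ℝ)..2 * π, exp (θ * I) * f (exp (θ * I)) / (exp (θ * I) - w) ^ 2 := by
    rw [circleIntegral, ← intervalIntegral.integral_const_mul]
    congr 1 with θ
    simp only [deriv_circleMap, circleMap_zero, ofReal_one, one_mul, smul_eq_mul]
    ring
  rw [hcircle, smul_eq_mul, inv_mul_eq_iff_eq_mul₀ two_pi_I_ne_zero] at hcauchy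
  exact mul_left_cancel₀ I_ne_zero (by rw [hcauchy]; ring)

theorem integral_exp_pow_div_sq {b : ℂ} (hb : ‖b‖ < 1) (k : ℕ) :
    ∫ θ in (0 : ℝ)..2 * π, exp (θ * I) ^ (k + 2) / ((1 - b * exp (θ * I)) * (exp (θ * I) - b)) ^ 2
      = 2 * π * (b ^ k * ((k + 1) * (1 - b ^ 2) + 2 * b ^ 2) / (1 - b ^ 2) ^ 3) := by
  set U : Set ℂ := {z | 1 - b * z ≠ 0}
  have hU : IsOpen U := isOpen_ne_fun (by fun_prop) continuous_const
  have hU1 : closedBall (0 : ℂ) 1 ⊆ U := fun z hz h ↦ by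
    have : ‖b * z‖ < 1 := by
      rw [norm_mul]
      exact (mul_le_of_le_one_right (norm_nonneg b) (by simpa using hz)).trans_lt hb
    rw [← sub_eq_zero.1 h, norm_one] at this
    exact this.false
  have hb2 : 1 - b * b ≠ 0 := hU1 (ball_subset_closedBall (mem_ball_zero_iff.2 hb))
  have hf : DifferentiableOn ℂ (fun z ↦ z ^ (k + 1) / (1 - b * z) ^ 2) U := by
    intro z hz
    have hz2 : (1 - b * z) ^ 2 ≠ 0 := pow_ne_zero 2 hz
    fun_prop (disch := assumption)
  have hderiv : HasDerivAt (fun z ↦ z ^ (k + 1) / (1 - b * z) ^ 2)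
      (b ^ k * ((k + 1) * (1 - b ^ 2) + 2 * b ^ 2) / (1 - b ^ 2) ^ 3) b := by
    refine ((hasDerivAt_pow (k + 1) b).div (((hasDerivAt_id b).const_mul b).const_sub 1 |>.pow 2)
      (pow_ne_zero 2 hb2)).congr_deriv ?_
    rw [← sq] at hb2
    simp only [Nat.cast_add, Nat.cast_one, add_tsub_cancel_right, id_eq, Pi.pow_apply,
      Nat.cast_ofNat, Nat.add_one_sub_one, pow_one, mul_one, mul_neg, sub_neg_eq_add]
    field_simp
    ring
  calc _ = ∫ θ in (0 : ℝ)..2 * π, exp (θ * I) * (exp (θ * I) ^ (k + 1) / (1 - b * exp (θ * I)) ^ 2)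
        / (exp (θ * I) - b) ^ 2 := by
        congr 1 with θ
        rw [mul_pow, ← div_div, pow_succ', mul_div_assoc]
    _ = _ := by rw [integral_exp_mul_div_sub_sq hU hU1 hf hb, hderiv.deriv]

variable {e η : ℝ}

theorem one_add_mul_cos_pos (he : |e| < 1) (θ : ℝ) : 0 < 1 + e * Real.cos θ := by
  have : |e * Real.cos θ| < 1 := by
    rw [abs_mul]
    exact (mul_le_of_le_one_right (abs_nonneg e) (abs_cos_le_one θ)).trans_lt he
  linarith [neg_abs_le (e * Real.cos θ)]

theorem ofReal_one_add_mul_cos_eq (hη : 1 + η ≠ 0) (hη2 : η ^ 2 + e ^ 2 = 1) (θ : ℝ) :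
    ((1 + e * Real.cos θ : ℝ) : ℂ) = (1 + η) * ((1 - -e / (1 + η) * exp (θ * I))
      * (exp (θ * I) - -e / (1 + η))) / (2 * exp (θ * I)) := by
  have hη' : (1 + η : ℂ) ≠ 0 := mod_cast hη
  push_cast
  rw [Complex.cos, neg_mul, Complex.exp_neg]
  field_simp
  linear_combination (-exp (θ * I)) * (by exact_mod_cast hη2 : (η : ℂ) ^ 2 + e ^ 2 = 1)

theorem integral_exp_mul_kozai_weight (hη : 0 < η) (hη2 : η ^ 2 + e ^ 2 = 1) (k : ℕ) :
    ∫ θ in (0 : ℝ)..2 * π, exp (k * θ * I) * ((η ^ 3 / (1 + e * Real.cos θ) ^ 2 : ℝ) : ℂ)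
      = ((2 * π * (-e / (1 + η)) ^ k * (1 + k * η) : ℝ) : ℂ) := by
  have h1η : (1 + η : ℂ) ≠ 0 := by exact_mod_cast (by linarith : 1 + η ≠ 0)
  have hη0 : (η : ℂ) ≠ 0 := by exact_mod_cast hη.ne'
  set b : ℂ := -e / (1 + η) with hb
  have hb_norm : ‖b‖ < 1 := by
    have he : |e| < 1 + η := by nlinarith [abs_nonneg e, sq_abs e]
    rw [hb, ← ofReal_one, ← ofReal_add, ← ofReal_neg, ← ofReal_div, norm_real, Real.norm_eq_abs,
      abs_div, abs_neg, abs_of_pos (by linarith : 0 < 1 + η), div_lt_one (by linarith)]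
    exact he
  have hb_sq : b ^ 2 = (1 - η) / (1 + η) := by
    rw [hb]
    field_simp
    linear_combination (by exact_mod_cast hη2 : (η : ℂ) ^ 2 + e ^ 2 = 1)
  have h1b : 1 - b ^ 2 = 2 * η / (1 + η) := by
    rw [hb_sq]
    field_simp
    ring
  have hpt : ∀ θ : ℝ, exp (k * θ * I) * ((η ^ 3 / (1 + e * Real.cos θ) ^ 2 : ℝ) : ℂ)
      = 4 * η ^ 3 / (1 + η) ^ 2
        * (exp (θ * I) ^ (k + 2) / ((1 - b * exp (θ * I)) * (exp (θ * I) - b)) ^ 2) := by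
    intro θ
    rw [ofReal_div, ofReal_pow, ofReal_pow, ofReal_one_add_mul_cos_eq (by linarith) hη2,
      show (k : ℂ) * θ * I = k * (θ * I) by ring, Complex.exp_nat_mul, div_pow,
      div_div_eq_mul_div]
    generalize (1 - b * exp (θ * I)) * (exp (θ * I) - b) = P
    generalize (1 + η : ℂ) = A
    ring
  rw [integral_congr fun θ _ ↦ hpt θ, intervalIntegral.integral_const_mul,
    integral_exp_pow_div_sq hb_norm k, h1b, hb_sq]
  push_cast
  rw [← hb]
  field_simp
  ring

theorem integral_sin_mul_kozai_weight (hη : 0 < η) (hη2 : η ^ 2 + e ^ 2 = 1) (k : ℕ) (ν : ℝ) :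
    ∫ θ in (0 : ℝ)..2 * π, Real.sin (k * θ + ν) * (η ^ 3 / (1 + e * Real.cos θ) ^ 2)
      = 2 * π * (-e / (1 + η)) ^ k * (1 + k * η) * Real.sin ν := by
  have he : |e| < 1 := (sq_lt_one_iff_abs_lt_one e).1 (by nlinarith)
  have hcont : Continuous fun θ : ℝ ↦
      exp (ν * I) * (exp (k * θ * I) * ((η ^ 3 / (1 + e * Real.cos θ) ^ 2 : ℝ) : ℂ)) := by
    have := fun θ ↦ pow_ne_zero 2 (one_add_mul_cos_pos he θ).ne'
    fun_prop (disch := exact this _)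
  have hpt : ∀ θ : ℝ, Real.sin (k * θ + ν) * (η ^ 3 / (1 + e * Real.cos θ) ^ 2)
      = RCLike.im (exp (ν * I) * (exp (k * θ * I) * ((η ^ 3 / (1 + e * Real.cos θ) ^ 2 : ℝ) : ℂ))) := by
    intro θ
    rw [RCLike.im_to_complex, ← mul_assoc, ← Complex.exp_add,
      show (ν : ℂ) * I + k * θ * I = ((k * θ + ν : ℝ) : ℂ) * I by push_cast; ring,
      im_mul_ofReal, exp_ofReal_mul_I_im]
  rw [integral_congr fun θ _ ↦ hpt θ, intervalIntegral_im (hcont.intervalIntegrable _ _),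
    intervalIntegral.integral_const_mul, integral_exp_mul_kozai_weight hη hη2 k,
    RCLike.im_to_complex, im_mul_ofReal, exp_ofReal_mul_I_im]
  ring

end

/-- Kozai's closed-form average over the true anomaly:
`(1/(2π)) ∫₀^{2π} sin(k·f + ν) · η³/(1 + e·cos f)² df
  = (−e)^k · (1 + k·η)/(1 + η)^k · sin ν`;
in particular, for `ν = 0` the average of `sin (k·f)` over the mean anomaly vanishes. -/
theorem average_sin_true_anomaly (e : ℝ) (he0 : 0 ≤ e) (he1 : e < 1)
    (η : ℝ) (hη : η = Real.sqrt (1 - e ^ 2)) (k : ℕ) (ν : ℝ) :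
    ((1 / (2 * Real.pi)) *
      ∫ f in (0:ℝ)..(2 * Real.pi),
        Real.sin ((k : ℝ) * f + ν) * (η ^ 3 / (1 + e * Real.cos f) ^ 2)
    = (-e) ^ k * (1 + (k : ℝ) * η) / (1 + η) ^ k * Real.sin ν) ∧
    ((1 / (2 * Real.pi)) *
      ∫ f in (0:ℝ)..(2 * Real.pi),
        Real.sin ((k : ℝ) * f) * (η ^ 3 / (1 + e * Real.cos f) ^ 2) = 0) := by
  have he2 : 0 < 1 - e ^ 2 := by nlinarith
  have hη2 : η ^ 2 + e ^ 2 = 1 := by rw [hη, sq_sqrt he2.le]; ring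
  have hηpos : 0 < η := hη ▸ sqrt_pos.2 he2
  have hsin := integral_sin_mul_kozai_weight hηpos hη2 k
  refine ⟨?_, ?_⟩
  · rw [hsin ν, div_pow]
    field_simp
  · have hsin0 := hsin 0
    simp only [add_zero, Real.sin_zero, mul_zero] at hsin0
    rw [hsin0, mul_zero]
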